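/- Let f(x) = a + b·x^β + c·x^γ be a polynomial with integer coefficients where a > 0, c > 0, b is a nonzero integer, and 1 ≤ β < γ are natural numbers. Then f has exactly two distinct positive real roots if and only if b < 0 and (a·γ)^{γ−β}·(c·γ)^{β} < |b·β|^{β}·|b·(γ−β)|^{γ−β}. -/

import Mathlib

/-!
For `b > 0` every term is positive, so there is no root. For `b < 0` write the trinomial as
`f x = A - B x^β + C x^γ` with `A, B, C > 0`. Its derivative `x^(β-1) (γ C x^(γ-β) - β B)` changes
sign exactly once on `(0, ∞)`, at the point `x₀` with `γ C x₀^(γ-β) = β B`, so `f` decreases from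
`f 0 = A > 0` to `f x₀` and then increases to `+∞`. Hence `f` has two positive roots iff `f x₀ < 0`,
and at the critical point `γ f x₀ = A γ - B (γ - β) x₀^β`; raising to the power `γ - β` and
eliminating `x₀` turns `f x₀ < 0` into the stated inequality.
-/

open Set Filter

theorem ncard_pos_zeros_eq_two_iff {f : ℝ → ℝ} {x₀ : ℝ} (hf : Continuous f) (hx₀ : 0 ≤ x₀)
    (hanti : StrictAntiOn f (Icc 0 x₀)) (hmono : StrictMonoOn f (Ici x₀)) (h0 : 0 < f 0)
    (htop : Tendsto f atTop atTop) :
    {x | 0 < x ∧ f x = 0}.ncard = 2 ↔ f x₀ < 0 := by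
  constructor
  · intro htwo
    by_contra! hmin
    have hsub : {x | 0 < x ∧ f x = 0} ⊆ {x₀} := by
      rintro x ⟨hx, hfx⟩
      by_contra hne
      rcases lt_or_gt_of_ne hne with hlt | hgt
      · linarith [hanti ⟨hx.le, hlt.le⟩ ⟨hx₀, le_rfl⟩ hlt]
      · linarith [hmono (le_refl x₀) hgt.le hgt]
    have := Set.ncard_le_ncard hsub (Set.finite_singleton x₀)
    rw [Set.ncard_singleton, htwo] at this
    omega
  · intro hneg
    obtain ⟨r, hr, hfr⟩ := intermediate_value_Ioo' hx₀ hf.continuousOn ⟨hneg, h0⟩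
    obtain ⟨M, hfM, hM⟩ := ((htop.eventually_gt_atTop 0).and (eventually_gt_atTop x₀)).exists
    obtain ⟨s, hs, hfs⟩ := intermediate_value_Ioo hM.le hf.continuousOn ⟨hneg, hfM⟩
    have hzeros : {x | 0 < x ∧ f x = 0} = {r, s} := by
      ext x
      constructor
      · rintro ⟨hx, hfx⟩
        rcases le_total x x₀ with hle | hge
        · exact Or.inl (hanti.injOn ⟨hx.le, hle⟩ (Ioo_subset_Icc_self hr) (hfx.trans hfr.symm))
        · exact Or.inr (hmono.injOn hge hs.1.le (hfx.trans hfs.symm))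
      · rintro (rfl | rfl)
        exacts [⟨hr.1, hfr⟩, ⟨hx₀.trans_lt hs.1, hfs⟩]
    rw [hzeros, Set.ncard_pair (hr.2.trans hs.1).ne]

section Trinomial

variable {A B C : ℝ} {β γ : ℕ}

theorem hasDerivAt_trinomial (hβ : 1 ≤ β) (hβγ : β ≤ γ) (x : ℝ) :
    HasDerivAt (fun x : ℝ => A - B * x ^ β + C * x ^ γ)
      (x ^ (β - 1) * (γ * C * x ^ (γ - β) - β * B)) x := by
  refine ((((hasDerivAt_pow β x).const_mul B).const_sub A).add
    ((hasDerivAt_pow γ x).const_mul C)).congr_deriv ?_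
  rw [show γ - 1 = (β - 1) + (γ - β) by omega, pow_add]
  ring

theorem strictAntiOn_trinomial (hC : 0 < C) (hβ : 1 ≤ β) (hβγ : β < γ) {x₀ : ℝ}
    (hcrit : γ * C * x₀ ^ (γ - β) = β * B) :
    StrictAntiOn (fun x : ℝ => A - B * x ^ β + C * x ^ γ) (Icc 0 x₀) := by
  refine strictAntiOn_of_deriv_neg (convex_Icc 0 x₀) (by fun_prop) fun x hx => ?_
  rw [interior_Icc] at hx
  rw [(hasDerivAt_trinomial hβ hβγ.le x).deriv]
  have hlt : x ^ (γ - β) < x₀ ^ (γ - β) := pow_lt_pow_left₀ hx.2 hx.1.le (by omega)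
  have hγC : (0 : ℝ) < γ * C := mul_pos (by exact_mod_cast (by omega : 0 < γ)) hC
  have := mul_lt_mul_of_pos_left hlt hγC
  exact mul_neg_of_pos_of_neg (pow_pos hx.1 _) (by linarith)

theorem strictMonoOn_trinomial (hC : 0 < C) (hβ : 1 ≤ β) (hβγ : β < γ) {x₀ : ℝ} (hx₀ : 0 ≤ x₀)
    (hcrit : γ * C * x₀ ^ (γ - β) = β * B) :
    StrictMonoOn (fun x : ℝ => A - B * x ^ β + C * x ^ γ) (Ici x₀) := by
  refine strictMonoOn_of_deriv_pos (convex_Ici x₀) (by fun_prop) fun x hx => ?_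
  rw [interior_Ici] at hx
  rw [(hasDerivAt_trinomial hβ hβγ.le x).deriv]
  have hlt : x₀ ^ (γ - β) < x ^ (γ - β) := pow_lt_pow_left₀ hx hx₀ (by omega)
  have hγC : (0 : ℝ) < γ * C := mul_pos (by exact_mod_cast (by omega : 0 < γ)) hC
  have := mul_lt_mul_of_pos_left hlt hγC
  exact mul_pos (pow_pos (hx₀.trans_lt hx) _) (by linarith)

theorem tendsto_trinomial_atTop (hC : 0 < C) (hβ : 1 ≤ β) (hβγ : β < γ) :
    Tendsto (fun x : ℝ => A - B * x ^ β + C * x ^ γ) atTop atTop := by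
  have hlead : Tendsto (fun x : ℝ => C * x ^ (γ - β) - B) atTop atTop :=
    tendsto_atTop_add_const_right _ (-B) ((tendsto_pow_atTop (by omega)).const_mul_atTop hC)
  have := tendsto_atTop_add_const_left atTop A
    ((tendsto_pow_atTop (by omega : β ≠ 0)).atTop_mul_atTop₀ hlead)
  refine this.congr fun x => ?_
  rw [← Nat.add_sub_cancel' hβγ.le, pow_add, Nat.add_sub_cancel_left]
  ring

theorem trinomial_neg_iff_of_critical (hA : 0 < A) (hB : 0 < B) (hC : 0 < C) (hβγ : β < γ)
    {x₀ : ℝ} (hx₀ : 0 < x₀) (hcrit : γ * C * x₀ ^ (γ - β) = β * B) :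
    A - B * x₀ ^ β + C * x₀ ^ γ < 0 ↔
      (A * γ) ^ (γ - β) * (C * γ) ^ β < (B * β) ^ β * (B * (γ - β)) ^ (γ - β) := by
  have hγ : (0 : ℝ) < γ := by exact_mod_cast (Nat.zero_le β).trans_lt hβγ
  have hγβ : (0 : ℝ) < γ - β := sub_pos.mpr (by exact_mod_cast hβγ)
  have hpow : x₀ ^ γ = x₀ ^ β * x₀ ^ (γ - β) := by rw [← pow_add, Nat.add_sub_cancel' hβγ.le]
  have hval : γ * (A - B * x₀ ^ β + C * x₀ ^ γ) = A * γ - B * (γ - β) * x₀ ^ β := by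
    rw [hpow]
    linear_combination x₀ ^ β * hcrit
  have helim : (B * (γ - β) * x₀ ^ β) ^ (γ - β) * (C * γ) ^ β =
      (B * β) ^ β * (B * (γ - β)) ^ (γ - β) := by
    rw [show B * β = γ * C * x₀ ^ (γ - β) by linarith]
    -- keeps `ring` from expanding `(B * γ - B * β) ^ (γ - β)`
    generalize B * ((γ : ℝ) - β) = D
    ring
  calc A - B * x₀ ^ β + C * x₀ ^ γ < 0
      ↔ A * γ < B * (γ - β) * x₀ ^ β := by
        rw [← mul_lt_mul_iff_of_pos_left hγ, mul_zero, hval, sub_neg]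
    _ ↔ (A * γ) ^ (γ - β) < (B * (γ - β) * x₀ ^ β) ^ (γ - β) :=
      (pow_lt_pow_iff_left₀ (by positivity) (mul_pos (mul_pos hB hγβ) (pow_pos hx₀ β)).le
        (by omega)).symm
    _ ↔ (A * γ) ^ (γ - β) * (C * γ) ^ β < (B * (γ - β) * x₀ ^ β) ^ (γ - β) * (C * γ) ^ β :=
      (mul_lt_mul_iff_of_pos_right (by positivity)).symm
    _ ↔ _ := by rw [helim]

theorem ncard_pos_roots_trinomial_eq_two_iff (hA : 0 < A) (hB : 0 < B) (hC : 0 < C)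
    (hβ : 1 ≤ β) (hβγ : β < γ) :
    {x : ℝ | 0 < x ∧ A - B * x ^ β + C * x ^ γ = 0}.ncard = 2 ↔
      (A * γ) ^ (γ - β) * (C * γ) ^ β < (B * β) ^ β * (B * (γ - β)) ^ (γ - β) := by
  obtain ⟨x₀, hx₀, hcrit⟩ : ∃ x₀ : ℝ, 0 < x₀ ∧ γ * C * x₀ ^ (γ - β) = β * B := by
    have hγ : (0 : ℝ) < γ := by exact_mod_cast (Nat.zero_le β).trans_lt hβγ
    refine ⟨(β * B / (γ * C)) ^ ((γ - β : ℕ) : ℝ)⁻¹, by positivity, ?_⟩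
    rw [Real.rpow_inv_natCast_pow (by positivity) (by omega)]
    field_simp
  rw [← trinomial_neg_iff_of_critical hA hB hC hβγ hx₀ hcrit]
  refine ncard_pos_zeros_eq_two_iff (by fun_prop) hx₀.le (strictAntiOn_trinomial hC hβ hβγ hcrit)
    (strictMonoOn_trinomial hC hβ hβγ hx₀.le hcrit) ?_ (tendsto_trinomial_atTop hC hβ hβγ)
  simpa [zero_pow (by omega : β ≠ 0), zero_pow (by omega : γ ≠ 0)] using hA

end Trinomial

/-- Criterion (from Section 3 of the paper) for a trinomial with positive
extreme coefficients to have exactly two distinct positive real roots. -/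
theorem trinomial_two_positive_roots_iff (a b c : ℤ) (β γ : ℕ)
    (ha : 0 < a) (hb : b ≠ 0) (hc : 0 < c) (hβ : 1 ≤ β) (hβγ : β < γ) :
    {x : ℝ | 0 < x ∧ (a : ℝ) + (b : ℝ) * x ^ β + (c : ℝ) * x ^ γ = 0}.ncard = 2 ↔
      (b < 0 ∧
        (a * (γ : ℤ)) ^ (γ - β) * (c * (γ : ℤ)) ^ β <
          |b * (β : ℤ)| ^ β * |b * ((γ : ℤ) - (β : ℤ))| ^ (γ - β)) := by
  have ha' : (0 : ℝ) < a := by exact_mod_cast ha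
  have hc' : (0 : ℝ) < c := by exact_mod_cast hc
  rcases hb.lt_or_gt with hneg | hpos
  · have hB : (0 : ℝ) < -b := by exact_mod_cast neg_pos.mpr hneg
    have key := ncard_pos_roots_trinomial_eq_two_iff ha' hB hc' hβ hβγ
    simp only [neg_mul, sub_neg_eq_add] at key
    rw [key, and_iff_right hneg, abs_of_neg (mul_neg_of_neg_of_pos hneg (by omega)),
      abs_of_neg (mul_neg_of_neg_of_pos hneg (by omega))]
    norm_cast
  · have hb' : (0 : ℝ) < b := by exact_mod_cast hpos
    have hnone : {x : ℝ | 0 < x ∧ (a : ℝ) + b * x ^ β + c * x ^ γ = 0} = ∅ :=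
      eq_empty_of_forall_notMem fun x ⟨hx, hfx⟩ => (by positivity : (0 : ℝ) < _).ne' hfx
    rw [hnone, ncard_empty]
    exact iff_of_false (by norm_num) fun h => h.1.not_gt hpos
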